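/- Let K ≥ 1 and j ≥ 0 be integers and let a, b be real numbers. Set q := ⌊a + 2bK⌋ and ω := a + 2bK − q. Then the improper integrals below converge and I_{C₄}(K,j;a−q−1,b) = −i · exp(2πi a K + 2πi b K²) · ∑_{l=0}^{j} (−i)^l · binom(j,l) · Ĩ_{C₉}(K,l; 1−ω, b). -/

import Mathlib

open MeasureTheory
open scoped BigOperators

/-- The integrand of `I_{C₄}`, i.e. of the contour integral of
`z^j exp(2πi c z + 2πi b z²)` along the downward ray `{K−it : t ≥ 0}`. -/
noncomputable def fC4 (K j : ℕ) (c b : ℝ) (t : ℝ) : ℂ :=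
  ((K : ℂ) - Complex.I * (t : ℂ)) ^ j *
    Complex.exp (2 * (Real.pi : ℂ) * Complex.I * (c : ℂ) *
        ((K : ℂ) - Complex.I * (t : ℂ)) +
      2 * (Real.pi : ℂ) * Complex.I * (b : ℂ) *
        ((K : ℂ) - Complex.I * (t : ℂ)) ^ 2)

/-- `I_{C₄}(K,j;c,b) = −i K^{-j} ∫_0^∞ (K−it)^j exp(2πic(K−it) + 2πib(K−it)²) dt`. -/
noncomputable def IC4 (K j : ℕ) (c b : ℝ) : ℂ :=
  -Complex.I * ((K : ℂ) ^ j)⁻¹ * ∫ t in Set.Ioi (0 : ℝ), fC4 K j c b t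

/-- The integrand of `Ĩ_{C₉}(K,l;w,b)`. -/
noncomputable def ftC9 (l : ℕ) (w b : ℝ) (t : ℝ) : ℂ :=
  (t : ℂ) ^ l * Complex.exp (-2 * (Real.pi : ℂ) * (w : ℂ) * (t : ℂ) -
    2 * (Real.pi : ℂ) * Complex.I * (b : ℂ) * (t : ℂ) ^ 2)

/-- `Ĩ_{C₉}(K,l;w,b) = K^{-l} ∫_0^∞ t^l exp(−2πwt − 2πib t²) dt`. -/
noncomputable def ItC9 (K l : ℕ) (w b : ℝ) : ℂ :=
  ((K : ℂ) ^ l)⁻¹ * ∫ t in Set.Ioi (0 : ℝ), ftC9 l w b t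

/-!
Along the ray `z = K − it` the exponent `2πicz + 2πibz²` equals `2πi(cK + bK²) − 2πwt − 2πibt²`
with `w = −(c + 2bK)`, so the integrand of `I_{C₄}` is a constant phase times `(K − it)^j` times
the integrand of `Ĩ_{C₉}`. Expanding `(K − it)^j`
binomially gives the sum. For `c = a − q − 1` one has `w = 1 − ω > 0`, which makes every
`Ĩ_{C₉}` integral converge, and the phase `2πi(a − q − 1)K` differs from `2πiaK` by an integer
multiple of `2πi`.
-/

open Complex Set

lemma norm_ftC9 (l : ℕ) (w b : ℝ) {t : ℝ} (ht : 0 ≤ t) :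
    ‖ftC9 l w b t‖ = t ^ l * Real.exp (-(2 * Real.pi * w) * t) := by
  simp [ftC9, norm_exp, abs_of_nonneg ht, ← ofReal_pow, mul_re]

lemma integrableOn_ftC9 (l : ℕ) {w : ℝ} (hw : 0 < w) (b : ℝ) :
    IntegrableOn (ftC9 l w b) (Ioi 0) := by
  have hdom : IntegrableOn (fun t : ℝ ↦ t ^ (l : ℝ) * Real.exp (-(2 * Real.pi * w) * t ^ (1 : ℝ)))
      (Ioi 0) :=
    integrableOn_rpow_mul_exp_neg_mul_rpow (by linarith [l.cast_nonneg (α := ℝ)]) one_pos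
      (by positivity)
  refine hdom.mono' (by unfold ftC9; fun_prop) ?_
  filter_upwards [ae_restrict_mem measurableSet_Ioi] with t ht
  rw [norm_ftC9 l w b ht.le, Real.rpow_natCast, Real.rpow_one]

lemma fC4_eq_sum_ftC9 (K j : ℕ) (c b t : ℝ) :
    fC4 K j c b t = cexp (2 * Real.pi * I * c * K + 2 * Real.pi * I * b * K ^ 2) *
      ∑ l ∈ Finset.range (j + 1),
        (j.choose l : ℂ) * (K : ℂ) ^ (j - l) * (-I) ^ l * ftC9 l (-(c + 2 * b * K)) b t := by
  have hexp : 2 * (Real.pi : ℂ) * I * c * (K - I * t) + 2 * Real.pi * I * b * (K - I * t) ^ 2 =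
      (2 * Real.pi * I * c * K + 2 * Real.pi * I * b * K ^ 2) +
        (-2 * Real.pi * ((-(c + 2 * b * K) : ℝ) : ℂ) * t - 2 * Real.pi * I * b * t ^ 2) := by
    push_cast
    linear_combination
      (2 * Real.pi * I * b * t ^ 2 - 2 * Real.pi * c * t - 4 * Real.pi * b * K * t : ℂ) * I_sq
  have hbinom : ((K : ℂ) - I * t) ^ j =
      ∑ l ∈ Finset.range (j + 1), (j.choose l : ℂ) * (K : ℂ) ^ (j - l) * (-I) ^ l * (t : ℂ) ^ l := by
    rw [sub_eq_neg_add, add_pow]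
    refine Finset.sum_congr rfl fun l _ ↦ ?_
    ring
  rw [fC4, hexp, exp_add, hbinom, Finset.mul_sum, Finset.sum_mul]
  refine Finset.sum_congr rfl fun l _ ↦ ?_
  rw [ftC9]
  ring

lemma integrableOn_fC4 (K j : ℕ) {c b : ℝ} (hc : c + 2 * b * K < 0) :
    IntegrableOn (fC4 K j c b) (Ioi 0) := by
  simp_rw [funext (fC4_eq_sum_ftC9 K j c b)]
  exact (integrable_finsetSum _ fun l _ ↦
    (integrableOn_ftC9 l (neg_pos.mpr hc) b).const_mul _).const_mul _

lemma IC4_eq_sum_ItC9 {K : ℕ} (hK : K ≠ 0) (j : ℕ) {c b : ℝ} (hc : c + 2 * b * K < 0) :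
    IC4 K j c b = -I * cexp (2 * Real.pi * I * c * K + 2 * Real.pi * I * b * K ^ 2) *
      ∑ l ∈ Finset.range (j + 1), (-I) ^ l * (j.choose l : ℂ) * ItC9 K l (-(c + 2 * b * K)) b := by
  have hK' : (K : ℂ) ≠ 0 := Nat.cast_ne_zero.mpr hK
  simp_rw [IC4, funext (fC4_eq_sum_ftC9 K j c b), integral_const_mul]
  rw [integral_finsetSum _ fun l _ ↦ (integrableOn_ftC9 l (neg_pos.mpr hc) b).const_mul _]
  simp only [Finset.mul_sum]
  refine Finset.sum_congr rfl fun l hl ↦ ?_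
  have hKj : (K : ℂ) ^ j = (K : ℂ) ^ (j - l) * (K : ℂ) ^ l := by
    rw [← pow_add, Nat.sub_add_cancel (Nat.lt_succ_iff.mp (Finset.mem_range.mp hl))]
  rw [integral_const_mul, ItC9, hKj]
  field_simp

/-- The improper integrals converge and `I_{C₄}(K,j;a−q−1,b)` equals
`−i e^{2πiaK+2πibK²} ∑_{l=0}^{j} (−i)^l C(j,l) Ĩ_{C₉}(K,l;1−ω,b)`. -/
theorem IC4_isolated_term_eq (K : ℕ) (hK : 1 ≤ K) (j : ℕ) (a b : ℝ) :
    IntegrableOn (fC4 K j (a - ((⌊a + 2 * b * K⌋ : ℤ) : ℝ) - 1) b) (Set.Ioi (0 : ℝ)) ∧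
    (∀ l : ℕ, l ≤ j →
      IntegrableOn (ftC9 l (1 - Int.fract (a + 2 * b * K)) b) (Set.Ioi (0 : ℝ))) ∧
    IC4 K j (a - ((⌊a + 2 * b * K⌋ : ℤ) : ℝ) - 1) b =
      -Complex.I * Complex.exp (2 * (Real.pi : ℂ) * Complex.I * (a : ℂ) * (K : ℂ) +
          2 * (Real.pi : ℂ) * Complex.I * (b : ℂ) * (K : ℂ) ^ 2) *
        ∑ l ∈ Finset.range (j + 1), (-Complex.I) ^ l * (j.choose l : ℂ) *
          ItC9 K l (1 - Int.fract (a + 2 * b * K)) b := by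
  set q : ℤ := ⌊a + 2 * b * K⌋
  have hw : -((a - q - 1) + 2 * b * K) = 1 - Int.fract (a + 2 * b * K) := by
    rw [Int.fract]; ring
  have hc : (a - q - 1) + 2 * b * K < 0 := by
    linarith [Int.fract_lt_one (a + 2 * b * K)]
  have hphase : cexp (2 * Real.pi * I * ((a - q - 1 : ℝ) : ℂ) * K + 2 * Real.pi * I * b * K ^ 2) =
      cexp (2 * Real.pi * I * a * K + 2 * Real.pi * I * b * K ^ 2) :=
    exp_eq_exp_iff_exists_int.mpr ⟨-(q + 1) * K, by push_cast; ring⟩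
  refine ⟨integrableOn_fC4 K j hc, fun l _ ↦ hw ▸ integrableOn_ftC9 l (neg_pos.mpr hc) b, ?_⟩
  rw [IC4_eq_sum_ItC9 (by omega) j hc, hphase, hw]
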